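/- Let 0 ≤ δ ≤ 1/2 and let ρ, σ be density matrices on ℂ^n with trace distance Δ(ρ,σ) ≥ 1 − 2δ. Then their fidelity satisfies F(ρ,σ) ≤ 2√(δ(1−δ)). -/

import Mathlib

open Matrix Kronecker ComplexOrder

/-- The trace norm `‖A‖₁ = Tr √(Aᴴ A)` of a complex matrix. -/
noncomputable def traceNorm {n : Type*} [Fintype n] [DecidableEq n] (A : Matrix n n ℂ) : ℝ :=
  (((Matrix.posSemidef_conjTranspose_mul_self A).1.eigenvectorUnitary.1 *
      diagonal (((↑) : ℝ → ℂ) ∘ (√·) ∘ (Matrix.posSemidef_conjTranspose_mul_self A).1.eigenvalues) *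
      (star (Matrix.posSemidef_conjTranspose_mul_self A).1.eigenvectorUnitary : Matrix n n ℂ)).trace).re

/-- The trace distance `Δ(ρ,σ) = ‖ρ - σ‖₁ / 2`. -/
noncomputable def traceDist {n : Type*} [Fintype n] [DecidableEq n] (ρ σ : Matrix n n ℂ) : ℝ :=
  traceNorm (ρ - σ) / 2

open scoped Classical in
/-- Positive semidefinite square root (junk value `0` on non-PSD matrices). -/
noncomputable def psdSqrt {n : Type*} [Fintype n] [DecidableEq n] (A : Matrix n n ℂ) :
    Matrix n n ℂ :=
  if h : A.PosSemidef then h.1.eigenvectorUnitary.1 * diagonal (((↑) : ℝ → ℂ) ∘ (√·) ∘ h.1.eigenvalues) *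
    (star h.1.eigenvectorUnitary : Matrix n n ℂ) else 0

/-- The fidelity `F(ρ,σ) = ‖√ρ √σ‖₁`. -/
noncomputable def fidelity {n : Type*} [Fintype n] [DecidableEq n] (ρ σ : Matrix n n ℂ) : ℝ :=
  traceNorm (psdSqrt ρ * psdSqrt σ)

/-- A density matrix: positive semidefinite with trace 1. -/
def IsDensityMatrix {n : Type*} [Fintype n] [DecidableEq n] (ρ : Matrix n n ℂ) : Prop :=
  ρ.PosSemidef ∧ ρ.trace = 1

/-- The projector `|b⟩⟨b|` on ℂ². -/
noncomputable def proj (b : Bool) : Matrix Bool Bool ℂ := Matrix.single b b 1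

/-- The strong oblivious transfer channel `F_{(x₀,x₁)}`. -/
noncomputable def sotChannel (x₀ x₁ : Bool) (ρ : Matrix (Bool × Bool) (Bool × Bool) ℂ) :
    Matrix (Bool × Bool) (Bool × Bool) ℂ :=
  ∑ i : Bool, ∑ i' : Bool,
    ρ (i, i') (i, i') •
      (((1/2 : ℂ) • (1 : Matrix Bool Bool ℂ)) ⊗ₖ proj (xor (bif xor i i' then x₁ else x₀) i'))

/-!
Write `F = Tr |√ρ √σ| = Re Tr (W √ρ √σ)` with `W Wᴴ ≤ 1` (polar decomposition), and let `P` be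
the spectral projection of `ρ - σ` onto its nonnegative eigenvalues, so that `Tr P (ρ - σ) = Δ`.
Inserting `1 = P + (1 - P)` between `√ρ` and `√σ` and applying Cauchy–Schwarz to each term bounds
`F` by the Bhattacharyya coefficient `√(pq) + √((1-p)(1-q))` of the outcome distributions
`p = Tr Pρ`, `q = Tr Pσ`, which is at most `√(1 - (p - q)²) = √(1 - Δ²)`. For `Δ ≥ 1 - 2δ ≥ 0`
this is `2 √(δ(1-δ))`.
-/

open scoped MatrixOrder ComplexOrder

lemma Real.sqrt_mul_sqrt_add_sqrt_mul_sqrt_le {p q : ℝ} (hp₀ : 0 ≤ p) (hp₁ : p ≤ 1)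
    (hq₀ : 0 ≤ q) (hq₁ : q ≤ 1) :
    √p * √q + √(1 - p) * √(1 - q) ≤ √(1 - (p - q) ^ 2) := by
  have hp' : 0 ≤ 1 - p := by linarith
  have hq' : 0 ≤ 1 - q := by linarith
  rw [Real.le_sqrt (by positivity) (by nlinarith)]
  -- the gap is `(√(p(1-p)) - √(q(1-q)))²`
  nlinarith [Real.sq_sqrt hp₀, Real.sq_sqrt hq₀, Real.sq_sqrt hp', Real.sq_sqrt hq',
    sq_nonneg (√p * √(1 - p) - √q * √(1 - q))]

namespace Matrix

lemma norm_trace_mul_mul_conjTranspose_le {n : Type*} [Fintype n] {Q : Matrix n n ℂ}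
    (hQ : 0 ≤ Q) (X Y : Matrix n n ℂ) :
    ‖(Y * Q * Xᴴ).trace‖ ≤ √(X * Q * Xᴴ).trace.re * √(Y * Q * Yᴴ).trace.re := by
  let := toMatrixSeminormedAddCommGroup Q hQ.posSemidef
  let := toMatrixInnerProductSpace Q hQ.posSemidef
  exact norm_inner_le_norm (𝕜 := ℂ) X Y

variable {n : Type*} [Fintype n] [DecidableEq n]

lemma continuousOn_spectrum (A : Matrix n n ℂ) (f : ℝ → ℝ) : ContinuousOn f (spectrum ℝ A) :=
  finite_real_spectrum.continuousOn _

lemma trace_mul_nonneg {A B : Matrix n n ℂ} (hA : 0 ≤ A) (hB : 0 ≤ B) : 0 ≤ (A * B).trace := by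
  have h := (hB.posSemidef.mul_mul_conjTranspose_same (CFC.sqrt A)).trace_nonneg
  rwa [← star_eq_conjTranspose, (CFC.sqrt_nonneg A).isSelfAdjoint.star_eq, trace_mul_cycle,
    CFC.sqrt_mul_sqrt_self A hA] at h

lemma re_trace_mul_le_of_le_one {A N : Matrix n n ℂ} (hA : 0 ≤ A) (hN : N ≤ 1) :
    (N * A).trace.re ≤ A.trace.re := by
  have h := Complex.nonneg_iff.mp (trace_mul_nonneg (sub_nonneg.mpr hN) hA)
  rw [sub_mul, one_mul, trace_sub, Complex.sub_re] at h
  linarith [h.1]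

lemma re_trace_mul_mul_mul_le {Q W : Matrix n n ℂ} (hQ : 0 ≤ Q) (hW : W * Wᴴ ≤ 1)
    (R S : Matrix n n ℂ) :
    (W * R * Q * S).trace.re ≤ √(Q * (Rᴴ * R)).trace.re * √(Q * (S * Sᴴ)).trace.re := by
  have hCS := norm_trace_mul_mul_conjTranspose_le hQ (Wᴴ * Sᴴ) R
  simp only [conjTranspose_mul, conjTranspose_conjTranspose] at hCS
  have hWRQS : (W * R * Q * S).trace = (R * Q * (S * W)).trace := by
    rw [mul_assoc, mul_assoc, trace_mul_comm]
    simp only [mul_assoc]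
  have hS : (Wᴴ * Sᴴ * Q * (S * W)).trace = (W * Wᴴ * (Sᴴ * Q * S)).trace := by
    rw [trace_mul_comm (W * Wᴴ)]
    simp only [mul_assoc]
    rw [trace_mul_comm Wᴴ]
    simp only [mul_assoc]
  have hS' : (Sᴴ * Q * S).trace = (Q * (S * Sᴴ)).trace := by
    rw [trace_mul_comm, ← mul_assoc, trace_mul_comm]
  have hR : (R * Q * Rᴴ).trace = (Q * (Rᴴ * R)).trace := by
    rw [trace_mul_comm, ← mul_assoc, trace_mul_comm]
  have hSQS : 0 ≤ Sᴴ * Q * S := (hQ.posSemidef.conjTranspose_mul_mul_same S).nonneg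
  calc (W * R * Q * S).trace.re ≤ ‖(R * Q * (S * W)).trace‖ := hWRQS ▸ Complex.re_le_norm _
    _ ≤ √(W * Wᴴ * (Sᴴ * Q * S)).trace.re * √(Q * (Rᴴ * R)).trace.re := by rwa [← hS, ← hR]
    _ ≤ √(Q * (S * Sᴴ)).trace.re * √(Q * (Rᴴ * R)).trace.re := by
        rw [← hS']
        exact mul_le_mul_of_nonneg_right
          (Real.sqrt_le_sqrt (re_trace_mul_le_of_le_one hSQS hW)) (Real.sqrt_nonneg _)
    _ = _ := mul_comm _ _

lemma exists_mul_conjTranspose_le_one_mul_eq_abs (A : Matrix n n ℂ) :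
    ∃ W : Matrix n n ℂ, W * Wᴴ ≤ 1 ∧ W * A = CFC.abs A := by
  set B := CFC.abs A
  have hc := B.continuousOn_spectrum
  have hWA : cfc (·⁻¹ : ℝ → ℝ) B * Aᴴ * A = B := calc
    _ = cfc (fun x : ℝ ↦ x⁻¹ * (x * x)) B := by
      rw [cfc_mul _ _ _ (hc _) (hc _), cfc_mul _ _ _ (hc _) (hc _), cfc_id' ℝ B, mul_assoc,
        CFC.abs_mul_abs, star_eq_conjTranspose]
    -- `0⁻¹ = 0` makes `x⁻¹ * (x * x) = x` hold for every real `x`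
    _ = cfc id B := cfc_congr fun x _ ↦ by
      rcases eq_or_ne x 0 with rfl | hx
      · simp
      · exact inv_mul_cancel_left₀ hx x
    _ = B := cfc_id ℝ B
  refine ⟨cfc (·⁻¹ : ℝ → ℝ) B * Aᴴ, ?_, hWA⟩
  have hself : (cfc (·⁻¹ : ℝ → ℝ) B)ᴴ = cfc (·⁻¹ : ℝ → ℝ) B := IsSelfAdjoint.cfc.star_eq
  calc cfc (·⁻¹ : ℝ → ℝ) B * Aᴴ * (cfc (·⁻¹ : ℝ → ℝ) B * Aᴴ)ᴴ
      = cfc (fun x : ℝ ↦ x * x⁻¹) B := by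
        rw [conjTranspose_mul, conjTranspose_conjTranspose, hself, ← mul_assoc, hWA,
          cfc_mul _ _ _ (hc _) (hc _), cfc_id' ℝ B]
    _ ≤ 1 := cfc_le_one _ _ fun x _ ↦ by
      rcases eq_or_ne x 0 with rfl | hx
      · simp
      · simp [hx]

lemma IsHermitian.exists_nonneg_le_one_mul_eq_posPart {M : Matrix n n ℂ} (hM : M.IsHermitian) :
    ∃ P : Matrix n n ℂ, 0 ≤ P ∧ P ≤ 1 ∧ P * M = M⁺ := by
  have hc := M.continuousOn_spectrum
  refine ⟨cfc (fun x : ℝ ↦ if 0 ≤ x then 1 else 0) M, cfc_nonneg fun x _ ↦ ?_,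
    cfc_le_one _ _ fun x _ ↦ ?_, ?_⟩
  · split_ifs <;> norm_num
  · split_ifs <;> norm_num
  · nth_rw 2 [← cfc_id' ℝ M hM.isSelfAdjoint]
    rw [← cfc_mul _ _ _ (hc _) (hc _), CFC.posPart_def, cfcₙ_eq_cfc]
    refine cfc_congr fun x _ ↦ ?_
    split_ifs with hx
    · simp [hx]
    · simp [posPart_eq_zero.mpr (not_le.mp hx).le]

end Matrix

section

variable {n : Type*} [Fintype n] [DecidableEq n]

lemma traceNorm_eq_re_trace_abs (A : Matrix n n ℂ) : traceNorm A = (CFC.abs A).trace.re := by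
  rw [CFC.abs, star_eq_conjTranspose,
    CFC.sqrt_eq_real_sqrt _ (posSemidef_conjTranspose_mul_self A).nonneg, cfcₙ_eq_cfc,
    (posSemidef_conjTranspose_mul_self A).1.cfc_eq]
  rfl

lemma psdSqrt_eq_sqrt {A : Matrix n n ℂ} (hA : A.PosSemidef) : psdSqrt A = CFC.sqrt A := by
  rw [psdSqrt, dif_pos hA, CFC.sqrt_eq_real_sqrt _ hA.nonneg, cfcₙ_eq_cfc, hA.1.cfc_eq]
  rfl

lemma traceDist_eq_re_trace_posPart {ρ σ : Matrix n n ℂ} (hH : (ρ - σ).IsHermitian)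
    (htr : ρ.trace = σ.trace) : traceDist ρ σ = ((ρ - σ)⁺).trace.re := by
  have h := congrArg (fun M ↦ M.trace.re) (CFC.abs_add_self (ρ - σ) hH.isSelfAdjoint)
  simp only [trace_add, trace_sub, htr, sub_self, add_zero, two_nsmul, Complex.add_re] at h
  rw [traceDist, traceNorm_eq_re_trace_abs, h]
  ring

theorem fidelity_le_sqrt_one_sub_traceDist_sq {ρ σ : Matrix n n ℂ} (hρ : IsDensityMatrix ρ)
    (hσ : IsDensityMatrix σ) : fidelity ρ σ ≤ √(1 - traceDist ρ σ ^ 2) := by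
  obtain ⟨hρ, hρ₁⟩ := hρ
  obtain ⟨hσ, hσ₁⟩ := hσ
  set R := CFC.sqrt ρ
  set S := CFC.sqrt σ
  have hR : Rᴴ * R = ρ := by
    rw [← star_eq_conjTranspose, (CFC.sqrt_nonneg ρ).isSelfAdjoint.star_eq,
      CFC.sqrt_mul_sqrt_self ρ hρ.nonneg]
  have hS : S * Sᴴ = σ := by
    rw [← star_eq_conjTranspose, (CFC.sqrt_nonneg σ).isSelfAdjoint.star_eq,
      CFC.sqrt_mul_sqrt_self σ hσ.nonneg]
  obtain ⟨W, hW, hWRS⟩ := exists_mul_conjTranspose_le_one_mul_eq_abs (R * S)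
  obtain ⟨P, hP₀, hP₁, hPM⟩ := (hρ.1.sub hσ.1).exists_nonneg_le_one_mul_eq_posPart
  set p := (P * ρ).trace.re
  set q := (P * σ).trace.re
  have hp₀ : 0 ≤ p := (Complex.nonneg_iff.mp (trace_mul_nonneg hP₀ hρ.nonneg)).1
  have hq₀ : 0 ≤ q := (Complex.nonneg_iff.mp (trace_mul_nonneg hP₀ hσ.nonneg)).1
  have hp₁ : p ≤ 1 := by simpa [hρ₁] using re_trace_mul_le_of_le_one hρ.nonneg hP₁
  have hq₁ : q ≤ 1 := by simpa [hσ₁] using re_trace_mul_le_of_le_one hσ.nonneg hP₁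
  have htrace_one_sub {A : Matrix n n ℂ} (hA : A.trace = 1) :
      ((1 - P) * A).trace.re = 1 - (P * A).trace.re := by
    rw [sub_mul, one_mul, trace_sub, hA, Complex.sub_re, Complex.one_re]
  have hΔ : traceDist ρ σ = p - q := by
    rw [traceDist_eq_re_trace_posPart (hρ.1.sub hσ.1) (hρ₁.trans hσ₁.symm), ← hPM, mul_sub,
      trace_sub, Complex.sub_re]
  have hsplit : W * (R * S) = W * R * P * S + W * R * (1 - P) * S := by
    simp only [mul_sub, sub_mul, mul_one, mul_assoc]
    abel
  calc fidelity ρ σ = (W * R * P * S).trace.re + (W * R * (1 - P) * S).trace.re := by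
        rw [fidelity, psdSqrt_eq_sqrt hρ, psdSqrt_eq_sqrt hσ, traceNorm_eq_re_trace_abs, ← hWRS,
          hsplit, trace_add, Complex.add_re]
    _ ≤ √p * √q + √(1 - p) * √(1 - q) := by
        gcongr
        · simpa only [hR, hS] using re_trace_mul_mul_mul_le hP₀ hW R S
        · simpa only [hR, hS, htrace_one_sub hρ₁, htrace_one_sub hσ₁] using
            re_trace_mul_mul_mul_le (sub_nonneg.mpr hP₁) hW R S
    _ ≤ √(1 - traceDist ρ σ ^ 2) := hΔ ▸ Real.sqrt_mul_sqrt_add_sqrt_mul_sqrt_le hp₀ hp₁ hq₀ hq₁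

end

theorem stmt_1_general {n : ℕ} (δ : ℝ) (hδ1 : δ ≤ 1/2)
    (ρ σ : Matrix (Fin n) (Fin n) ℂ)
    (hρ : IsDensityMatrix ρ) (hσ : IsDensityMatrix σ)
    (h : traceDist ρ σ ≥ 1 - 2 * δ) :
    fidelity ρ σ ≤ 2 * Real.sqrt (δ * (1 - δ)) := by
  have hδ : 0 ≤ 1 - 2 * δ := by linarith
  calc fidelity ρ σ ≤ √(1 - traceDist ρ σ ^ 2) := fidelity_le_sqrt_one_sub_traceDist_sq hρ hσ
    _ ≤ √(1 - (1 - 2 * δ) ^ 2) := by gcongr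
    _ = 2 * √(δ * (1 - δ)) := by
        rw [show 1 - (1 - 2 * δ) ^ 2 = 2 ^ 2 * (δ * (1 - δ)) by ring,
          Real.sqrt_mul (by norm_num), Real.sqrt_sq zero_le_two]

/-- If `Δ(ρ,σ) ≥ 1 - 2δ` then `F(ρ,σ) ≤ 2√(δ(1-δ))`. -/
theorem stmt_1 {n : ℕ} (δ : ℝ) (hδ0 : 0 ≤ δ) (hδ1 : δ ≤ 1/2)
    (ρ σ : Matrix (Fin n) (Fin n) ℂ)
    (hρ : IsDensityMatrix ρ) (hσ : IsDensityMatrix σ)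
    (h : traceDist ρ σ ≥ 1 - 2 * δ) :
    fidelity ρ σ ≤ 2 * Real.sqrt (δ * (1 - δ)) :=
  stmt_1_general δ hδ1 ρ σ hρ hσ h
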